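/- arXiv:2005.08957 — 5 statements merged into one kernel-verified Lean document; each statement's English description precedes it below -/
import Mathlib

section
/- Fix t, λ ∈ ℂ. Let D(z) = 6z³ + 2t·z² + λ and let N(z₁, z₂, z₃) = 2z₁·(15z₁⁵ − (9z₂ + 9z₃ − 4t)·z₁⁴ − (2t·z₂ + 2t·z₃ − 3z₂z₃)·z₁³ + λ·z₁² − λ·z₂z₃). Then there exists a polynomial Q ∈ ℂ[z₁, z₂, z₃] such that for all pairwise distinct z₁, z₂, z₃ ∈ ℂ with D(z₁), D(z₂), D(z₃) all nonzero, one has N(z₁,z₂,z₃)/((z₁−z₂)³(z₁−z₃)³·D(z₁)²) + N(z₂,z₃,z₁)/((z₂−z₃)³(z₂−z₁)³·D(z₂)²) + N(z₃,z₁,z₂)/((z₃−z₁)³(z₃−z₂)³·D(z₃)²) = Q(z₁,z₂,z₃)/(D(z₁)²·D(z₂)²·D(z₃)²). In particular, the left-hand side has no poles along the diagonals z_i = z_j. -/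
/-- Denominator `D(z) = 6z³ + 2t·z² + λ` for the (1,4) spectral curve. -/
noncomputable def D14 (t lam z : ℂ) : ℂ := 6 * z ^ 3 + 2 * t * z ^ 2 + lam

/-- Numerator `N(z₁,z₂,z₃)` appearing in `W₀,₃` for the (1,4) spectral curve. -/
noncomputable def N14 (t lam z₁ z₂ z₃ : ℂ) : ℂ :=
  2 * z₁ * (15 * z₁ ^ 5 - (9 * z₂ + 9 * z₃ - 4 * t) * z₁ ^ 4
    - (2 * t * z₂ + 2 * t * z₃ - 3 * z₂ * z₃) * z₁ ^ 3 + lam * z₁ ^ 2 - lam * z₂ * z₃)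

/-!
Clearing denominators, the cyclic sum becomes `P / (V³ · D(z₁)² D(z₂)² D(z₃)²)` with
`V = (z₁ - z₂)(z₁ - z₃)(z₂ - z₃)` and `P` an explicit polynomial. The cancellation of the
diagonal poles is the identity `P = Q · V³`, where `Q` is symmetric and hence a polynomial in the
elementary symmetric functions `e₁, e₂, e₃` of `z₁, z₂, z₃`.
-/

def W03Numerator14 {R : Type*} [CommRing R] (t lam e₁ e₂ e₃ : R) : R :=
  6 * lam ^ 4
    + (144 * e₃ - 72 * e₁ ^ 3 - 48 * t * e₁ ^ 2 - 8 * t ^ 2 * e₁) * lam ^ 3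
    + (1296 * e₃ ^ 2 - 432 * e₁ ^ 3 * e₃ + 648 * e₁ ^ 2 * e₂ ^ 2 - 432 * e₂ ^ 3
        + 144 * t * e₁ ^ 3 * e₂ - 144 * t * e₁ ^ 2 * e₃ + 144 * t * e₁ * e₂ ^ 2
        + 96 * t ^ 2 * e₁ ^ 2 * e₂ + 48 * t ^ 2 * e₁ * e₃ - 24 * t ^ 2 * e₂ ^ 2
        + 16 * t ^ 3 * e₁ * e₂ + 16 * t ^ 3 * e₃) * lam ^ 2
    + (5184 * e₃ ^ 3 - 2592 * e₂ ^ 3 * e₃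
        + 864 * t * e₁ ^ 2 * e₃ ^ 2 - 1728 * t * e₁ * e₂ ^ 2 * e₃
        - 288 * t ^ 2 * e₁ ^ 2 * e₂ * e₃ + 576 * t ^ 2 * e₁ * e₃ ^ 2 - 576 * t ^ 2 * e₂ ^ 2 * e₃
        - 192 * t ^ 3 * e₁ * e₂ * e₃ + 96 * t ^ 3 * e₃ ^ 2 - 32 * t ^ 4 * e₂ * e₃) * lam
    + 7776 * e₃ ^ 4

theorem map_W03Numerator14 {R S : Type*} [CommRing R] [CommRing S] (f : R →+* S)
    (t lam e₁ e₂ e₃ : R) :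
    f (W03Numerator14 t lam e₁ e₂ e₃) = W03Numerator14 (f t) (f lam) (f e₁) (f e₂) (f e₃) := by
  simp only [W03Numerator14, map_add, map_sub, map_mul, map_pow, map_ofNat]

theorem cyclic_sum_div_eq_of_numerator_eq {K : Type*} [Field K]
    {x y z d₁ d₂ d₃ n₁ n₂ n₃ q : K} (hxy : x ≠ y) (hxz : x ≠ z) (hyz : y ≠ z)
    (hd₁ : d₁ ≠ 0) (hd₂ : d₂ ≠ 0) (hd₃ : d₃ ≠ 0)
    (h : n₁ * ((y - z) ^ 3 * d₂ ^ 2 * d₃ ^ 2) - n₂ * ((x - z) ^ 3 * d₁ ^ 2 * d₃ ^ 2)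
        + n₃ * ((x - y) ^ 3 * d₁ ^ 2 * d₂ ^ 2) = q * ((x - y) * (x - z) * (y - z)) ^ 3) :
    n₁ / ((x - y) ^ 3 * (x - z) ^ 3 * d₁ ^ 2) + n₂ / ((y - z) ^ 3 * (y - x) ^ 3 * d₂ ^ 2)
        + n₃ / ((z - x) ^ 3 * (z - y) ^ 3 * d₃ ^ 2)
      = q / (d₁ ^ 2 * d₂ ^ 2 * d₃ ^ 2) := by
  have hxy' : x - y ≠ 0 := sub_ne_zero.mpr hxy
  have hxz' : x - z ≠ 0 := sub_ne_zero.mpr hxz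
  have hyz' : y - z ≠ 0 := sub_ne_zero.mpr hyz
  rw [← neg_sub x y, ← neg_sub x z, ← neg_sub y z]
  field_simp
  linear_combination h

theorem cyclic_numerator14_eq (t lam z₁ z₂ z₃ : ℂ) :
    N14 t lam z₁ z₂ z₃ * ((z₂ - z₃) ^ 3 * D14 t lam z₂ ^ 2 * D14 t lam z₃ ^ 2)
      - N14 t lam z₂ z₃ z₁ * ((z₁ - z₃) ^ 3 * D14 t lam z₁ ^ 2 * D14 t lam z₃ ^ 2)
      + N14 t lam z₃ z₁ z₂ * ((z₁ - z₂) ^ 3 * D14 t lam z₁ ^ 2 * D14 t lam z₂ ^ 2)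
      = W03Numerator14 t lam (z₁ + z₂ + z₃) (z₁ * z₂ + z₁ * z₃ + z₂ * z₃) (z₁ * z₂ * z₃)
          * ((z₁ - z₂) * (z₁ - z₃) * (z₂ - z₃)) ^ 3 := by
  simp only [N14, D14, W03Numerator14]
  ring

/-- The symmetrized sum defining `W₀,₃` for the (1,4) curve has no poles
along the diagonals `zᵢ = zⱼ`: it equals `Q(z₁,z₂,z₃)/(D(z₁)²D(z₂)²D(z₃)²)` for some
polynomial `Q`. -/
theorem W03_holomorphic_on_diagonal_14 (t lam : ℂ) :
    ∃ Q : MvPolynomial (Fin 3) ℂ, ∀ z₁ z₂ z₃ : ℂ,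
      z₁ ≠ z₂ → z₁ ≠ z₃ → z₂ ≠ z₃ →
      D14 t lam z₁ ≠ 0 → D14 t lam z₂ ≠ 0 → D14 t lam z₃ ≠ 0 →
      N14 t lam z₁ z₂ z₃ / ((z₁ - z₂) ^ 3 * (z₁ - z₃) ^ 3 * (D14 t lam z₁) ^ 2)
        + N14 t lam z₂ z₃ z₁ / ((z₂ - z₃) ^ 3 * (z₂ - z₁) ^ 3 * (D14 t lam z₂) ^ 2)
        + N14 t lam z₃ z₁ z₂ / ((z₃ - z₁) ^ 3 * (z₃ - z₂) ^ 3 * (D14 t lam z₃) ^ 2)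
      = MvPolynomial.eval ![z₁, z₂, z₃] Q /
          ((D14 t lam z₁) ^ 2 * (D14 t lam z₂) ^ 2 * (D14 t lam z₃) ^ 2) := by
  open MvPolynomial in
  refine ⟨W03Numerator14 (C t) (C lam) (X 0 + X 1 + X 2) (X 0 * X 1 + X 0 * X 2 + X 1 * X 2)
    (X 0 * X 1 * X 2), fun z₁ z₂ z₃ h₁₂ h₁₃ h₂₃ hD₁ hD₂ hD₃ => ?_⟩
  rw [map_W03Numerator14]
  simp only [map_add, map_mul, MvPolynomial.eval_C, MvPolynomial.eval_X, Matrix.cons_val_zero,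
    Matrix.cons_val_one, Matrix.cons_val_two, Matrix.head_cons, Matrix.tail_cons]
  exact cyclic_sum_div_eq_of_numerator_eq h₁₂ h₁₃ h₂₃ hD₁ hD₂ hD₃ (cyclic_numerator14_eq ..)
end

section
/- In the ring of formal power series ℚ⟦w⟧, the following identity holds: exp(−w)·(exp(w) − 1)²·(1 − ∑_{n≥0} (B_{n+2}/((n+2)·n!))·w^{n+2}) = w², where B_n denotes the n-th Bernoulli number, defined by w/(e^w − 1) = ∑_{n≥0} B_n·w^n/n!. -/
/-!
With `B = X / (eˣ - 1)` the Bernoulli generating series, the bracket is `B - X B'`: its `n`-th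
coefficient is `(1 - n) Bₙ / n!`. Differentiating `B (eˣ - 1) = X` gives `B - X B' = B² eˣ`, so
the product collapses to `e⁻ˣ eˣ (B (eˣ - 1))² = X²`.
-/

open PowerSeries Nat

namespace PowerSeries

variable (A : Type*) [CommRing A] [Algebra ℚ A]

theorem derivative_bernoulliPowerSeries_mul_exp_sub_one :
    d⁄dX A (bernoulliPowerSeries A) * (exp A - 1) + bernoulliPowerSeries A * exp A = 1 := by
  have h := congrArg (d⁄dX A) (bernoulliPowerSeries_mul_exp_sub_one A)
  rw [Derivation.leibniz, map_sub, derivative_exp, derivative_one, derivative_X] at h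
  linear_combination h

theorem bernoulliPowerSeries_sub_X_mul_derivative :
    bernoulliPowerSeries A - X * d⁄dX A (bernoulliPowerSeries A)
      = bernoulliPowerSeries A ^ 2 * exp A := by
  linear_combination d⁄dX A (bernoulliPowerSeries A) * bernoulliPowerSeries_mul_exp_sub_one A
    - bernoulliPowerSeries A * derivative_bernoulliPowerSeries_mul_exp_sub_one A

theorem coeff_bernoulliPowerSeries_sub_X_mul_derivative (n : ℕ) :
    coeff n (bernoulliPowerSeries A - X * d⁄dX A (bernoulliPowerSeries A))
      = algebraMap ℚ A ((1 - n) * bernoulli n / n !) := by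
  rcases n with _ | n
  · simp [bernoulliPowerSeries]
  · rw [map_sub, coeff_succ_X_mul, coeff_derivative, bernoulliPowerSeries, coeff_mk,
      ← Nat.cast_succ, ← map_natCast (algebraMap ℚ A), ← map_mul, ← map_sub]
    congr 1
    push_cast
    ring

end PowerSeries

theorem one_sub_X_sq_mul_mk_bernoulli :
    (1 : ℚ⟦X⟧) - X ^ 2 * mk (fun n => bernoulli (n + 2) / (((n + 2) * n.factorial : ℕ) : ℚ))
      = bernoulliPowerSeries ℚ - X * d⁄dX ℚ (bernoulliPowerSeries ℚ) := by
  ext n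
  rw [coeff_bernoulliPowerSeries_sub_X_mul_derivative, Algebra.algebraMap_self_apply]
  rcases n with _ | _ | n
  · simp
  · simp [coeff_X_pow_mul']
  · rw [map_sub, coeff_one, if_neg (succ_ne_zero _), coeff_X_pow_mul', if_pos (by omega),
      coeff_mk, show n + 1 + 1 - 2 = n by omega]
    push_cast [factorial_succ]
    field_simp
    ring

/-- In `ℚ⟦w⟧`:
`exp(−w)·(exp(w) − 1)²·(1 − ∑_{n≥0} (B_{n+2}/((n+2)·n!))·w^{n+2}) = w²`,
where `B_n` is the `n`-th Bernoulli number (generating function `w/(e^w − 1) = ∑ B_n wⁿ/n!`). -/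
theorem bernoulli_second_difference_inverse :
    (rescale (-1) (exp ℚ)) * (exp ℚ - 1) ^ 2 *
      (1 - X ^ 2 * PowerSeries.mk
        (fun n => bernoulli (n + 2) / (((n + 2) * n.factorial : ℕ) : ℚ))) = X ^ 2 := by
  have exp_mul_exp_neg : exp ℚ * rescale (-1) (exp ℚ) = 1 := exp_mul_exp_neg_eq_one
  rw [one_sub_X_sq_mul_mk_bernoulli, bernoulliPowerSeries_sub_X_mul_derivative]
  linear_combination ((exp ℚ - 1) * bernoulliPowerSeries ℚ) ^ 2 * exp_mul_exp_neg
    + (bernoulliPowerSeries ℚ * (exp ℚ - 1) + X) * bernoulliPowerSeries_mul_exp_sub_one ℚ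
end

section
/- Let I ⊆ ℝ be an open interval and let (G_g)_{g≥2} be a sequence of smooth real-valued functions on I. Suppose that for every even integer k ≥ 4, ∑ (2/n!)·G_g^{(n)} = 0 identically on I, where the sum is over all pairs (g, n) with g ≥ 2, n ≥ 2 even, and 2g − 2 + n = k (equivalently: the formal series G(λ; ħ) = ∑_{g≥2} ħ^{2g−2}·G_g(λ) satisfies G(λ+ħ) − 2G(λ) + G(λ−ħ) = 0 upon Taylor expansion in ħ). Then G_g'' ≡ 0 on I for every g ≥ 2; that is, each G_g is an affine function of λ. -/
lemma auxWithinEqDeriv {I : Set ℝ} (hI : IsOpen I) (f : ℝ → ℝ) (n : ℕ) {x : ℝ}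
    (hx : x ∈ I) : iteratedDerivWithin n f I x = iteratedDeriv n f x := by
  simp [iteratedDerivWithin, iteratedDeriv, iteratedFDerivWithin_of_isOpen n hI hx]

lemma auxZeroDeriv {I : Set ℝ} (hI : IsOpen I) (f : ℝ → ℝ) (hf : ∀ x ∈ I, f x = 0) :
    ∀ n, ∀ x ∈ I, iteratedDeriv n f x = 0 := by
  intro n
  induction n with
  | zero => simpa using hf
  | succ n ih =>
    intro x hx
    rw [iteratedDeriv_succ]
    have h : deriv (iteratedDeriv n f) x = deriv (fun _ => (0:ℝ)) x := by
      apply Filter.EventuallyEq.deriv_eq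
      filter_upwards [hI.mem_nhds hx] with y hy using ih y hy
    simpa using h

lemma auxIterAdd (f : ℝ → ℝ) (k : ℕ) :
    ∀ m, iteratedDeriv (m + k) f = iteratedDeriv m (iteratedDeriv k f) := by
  intro m
  induction m with
  | zero => simp
  | succ m ih =>
    have : m + 1 + k = (m + k) + 1 := by omega
    rw [this, iteratedDeriv_succ, ih, ← iteratedDeriv_succ]

lemma auxHigher {I : Set ℝ} (hI : IsOpen I) (f : ℝ → ℝ)
    (h2 : ∀ x ∈ I, iteratedDeriv 2 f x = 0) :
    ∀ n, 2 ≤ n → ∀ x ∈ I, iteratedDeriv n f x = 0 := by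
  intro n hn x hx
  obtain ⟨m, rfl⟩ : ∃ m, n = m + 2 := ⟨n - 2, by omega⟩
  rw [auxIterAdd f 2 m]
  exact auxZeroDeriv hI _ h2 m x hx

/-- Let `I ⊆ ℝ` be an open interval and `(G_g)_{g≥2}` smooth functions on
`I`.  If for every even `k ≥ 4` one has
`∑_{(g,n) : g ≥ 2, n ≥ 2 even, 2g−2+n = k} (2/n!)·G_g⁽ⁿ⁾ = 0` on `I`
(i.e. `G(λ;ℏ) = ∑_{g≥2} ℏ^{2g−2} G_g(λ)` satisfies the homogeneous three-term difference
equation `G(λ+ℏ) − 2G(λ) + G(λ−ℏ) = 0` upon Taylor expansion in `ℏ`), then `G_g'' ≡ 0`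
on `I` for every `g ≥ 2`, i.e. each `G_g` is affine. -/
theorem homogeneous_three_term_forces_affine
    (I : Set ℝ) (hIopen : IsOpen I) (hIconn : I.OrdConnected)
    (G : ℕ → ℝ → ℝ)
    (hsmooth : ∀ g, 2 ≤ g → ContDiffOn ℝ (⊤ : ℕ∞) (G g) I)
    (hthree : ∀ k : ℕ, Even k → 4 ≤ k → ∀ l ∈ I,
      ∑ p ∈ (Finset.range (k + 3) ×ˢ Finset.range (k + 3)).filter
          (fun p => 2 ≤ p.1 ∧ 2 ≤ p.2 ∧ Even p.2 ∧ 2 * p.1 + p.2 = k + 2),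
        (2 / (p.2.factorial : ℝ)) * iteratedDerivWithin p.2 (G p.1) I l = 0) :
    ∀ g, 2 ≤ g → ∀ l ∈ I, iteratedDerivWithin 2 (G g) I l = 0 := by
  intro g
  induction g using Nat.strong_induction_on with
  | _ g ih =>
    intro hg l hl
    have hsum := hthree (2 * g) ⟨g, by ring⟩ (by omega) l hl
    rw [Finset.sum_eq_single_of_mem ((g, 2) : ℕ × ℕ)] at hsum
    · rw [auxWithinEqDeriv hIopen _ 2 hl] at hsum ⊢
      have : (2 / ((2:ℕ).factorial : ℝ)) = 1 := by norm_num
      rw [this, one_mul] at hsum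
      exact hsum
    · simp only [Finset.mem_filter, Finset.mem_product, Finset.mem_range]
      exact ⟨⟨by omega, by omega⟩, hg, le_refl 2, by decide, trivial⟩
    · rintro ⟨a, b⟩ hmem hne
      simp only [Finset.mem_filter, Finset.mem_product, Finset.mem_range] at hmem
      obtain ⟨⟨-, -⟩, ha2, hb2, -, heq⟩ := hmem
      have halt : a < g := by
        rcases Nat.lt_or_ge a g with h | h
        · exact h
        · exfalso; apply hne; have : a = g := by omega
          subst this
          have : b = 2 := by omega
          simp [this]
      have h2 : ∀ x ∈ I, iteratedDeriv 2 (G a) x = 0 := by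
        intro x hx
        have := ih a halt ha2 x hx
        rwa [auxWithinEqDeriv hIopen _ 2 hx] at this
      have := auxHigher hIopen (G a) h2 b hb2 l hl
      rw [auxWithinEqDeriv hIopen _ b hl, this, mul_zero]
end

section
/- Let V be a vector space over ℚ, let D : V → V be a ℚ-linear map, and let f, F₀ ∈ V satisfy D²F₀ = f. In the module V⟦ħ⟧ of formal power series with coefficients in V, define the operators e^{±ħD} = ∑_{k≥0} (±1)^k·ħ^k·D^k/k! (acting coefficientwise). Then (e^{ħD} − 2 + e^{−ħD})·(F₀ − ∑_{n≥0} (B_{n+2}/((n+2)·n!))·ħ^{n+2}·D^n f) = ħ²·f, where B_n denotes the n-th Bernoulli number, defined by w/(e^w − 1) = ∑_{n≥0} B_n·w^n/n!. -/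
/-
`Φ(w) = B(w) − w B'(w)`, with `B(w) = w/(e^w − 1)`, satisfies `(e^w − 2 + e^{−w}) Φ(w) = w²`, and
the paper's inverse operator is `Φ(ℏD)/(ℏD)²`. Since `Φ_m = (1 − m) B_m / m!`, applying `Dᵏ` to the
`ℏᵐ`-coefficient of the series gives `Φ_m D^{k+m−2} f` whenever `k + m ≥ 2` (for `m = 0` because
`D²F₀ = f`). So the `ℏⁿ`-coefficient of the left-hand side is the `wⁿ`-coefficient of `w²` times
`D^{n−2} f`.
-/

/-- The coefficientwise action of the operator `e^{cℏD} = ∑_k cᵏ ℏᵏ Dᵏ/k!` on a formal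
power series `∑_n ℏⁿ F n` with coefficients in a `ℚ`-vector space `V`: the `n`-th
coefficient of the result is `∑_{k≤n} (cᵏ/k!) • Dᵏ (F (n−k))`. -/
noncomputable def expOp {V : Type*} [AddCommGroup V] [Module ℚ V]
    (D : V →ₗ[ℚ] V) (c : ℚ) (F : ℕ → V) : ℕ → V :=
  fun n => ∑ k ∈ Finset.range (n + 1), (c ^ k / (k.factorial : ℚ)) • (D ^ k) (F (n - k))

/-- The coefficients of the series `F₀ − ∑_{n≥0} (B_{n+2}/((n+2)·n!))·ℏ^{n+2}·Dⁿ f`: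
`F₀` at `ℏ⁰`, `0` at `ℏ¹`, and `−(B_k/(k·(k−2)!)) • D^{k−2} f` at `ℏᵏ` for `k ≥ 2`. -/
noncomputable def bernoulliNumSeries {V : Type*} [AddCommGroup V] [Module ℚ V]
    (D : V →ₗ[ℚ] V) (f F₀ : V) : ℕ → V :=
  fun k => if k = 0 then F₀ else if 2 ≤ k then
    -((bernoulli k : ℚ) / ((k : ℚ) * ((k - 2).factorial : ℚ))) • (D ^ (k - 2)) f
  else 0

open PowerSeries Finset

theorem PowerSeries.coeff_X_mul_derivative {R : Type*} [CommSemiring R] (f : R⟦X⟧) (n : ℕ) :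
    coeff n (X * d⁄dX R f) = n * coeff n f := by
  cases n with
  | zero => simp
  | succ n => rw [coeff_succ_X_mul, coeff_derivative, mul_comm]; push_cast; rfl

section SecondDifference

variable (A : Type*) [CommRing A] [Algebra ℚ A]

noncomputable def centralSecondDiff : A⟦X⟧ :=
  exp A - 2 + evalNegHom (exp A)

noncomputable def bernoulliSecondDiffInv : A⟦X⟧ :=
  bernoulliPowerSeries A - X * d⁄dX A (bernoulliPowerSeries A)

/-- `e^w − 2 + e^{−w} = e^{−w}(e^w − 1)²`, and differentiating `B(w)(e^w − 1) = w` gives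
`(e^w − 1)(B − wB') = w B e^w`; multiplying by `e^{−w}(e^w − 1)` leaves `w B (e^w − 1) = w²`. -/
theorem centralSecondDiff_mul_bernoulliSecondDiffInv :
    centralSecondDiff A * bernoulliSecondDiffInv A = X ^ 2 := by
  set E := exp A
  set B := bernoulliPowerSeries A
  have hB : B * (E - 1) = X := bernoulliPowerSeries_mul_exp_sub_one A
  have hE : E * evalNegHom E = 1 := exp_mul_exp_neg_eq_one
  have hB' : d⁄dX A B * (E - 1) + B * E = 1 := by
    have hd := congrArg (d⁄dX A) hB
    rw [Derivation.leibniz, derivative_X, map_sub, Derivation.map_one_eq_zero, derivative_exp,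
      sub_zero, smul_eq_mul, smul_eq_mul] at hd
    linear_combination hd
  rw [centralSecondDiff, bernoulliSecondDiffInv]
  linear_combination (evalNegHom E * (E - 1 + X * E)) * hB
    - (evalNegHom E * X * (E - 1)) * hB' + (X ^ 2 - (E - 2) * (B - X * d⁄dX A B)) * hE

end SecondDifference

theorem coeff_centralSecondDiff (k : ℕ) :
    coeff k (centralSecondDiff ℚ) =
      (1 + (-1) ^ k) / (k.factorial : ℚ) - if k = 0 then 2 else 0 := by
  rw [centralSecondDiff, evalNegHom, map_add, map_sub, coeff_rescale, coeff_exp,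
    show (2 : ℚ⟦X⟧) = C 2 from rfl, coeff_C]
  simp only [Algebra.algebraMap_self_apply]
  ring

theorem coeff_bernoulliSecondDiffInv (m : ℕ) :
    coeff m (bernoulliSecondDiffInv ℚ) = (1 - m) * bernoulli m / m.factorial := by
  rw [bernoulliSecondDiffInv, map_sub, coeff_X_mul_derivative, bernoulliPowerSeries, coeff_mk,
    Algebra.algebraMap_self_apply]
  ring

section Operators

variable {V : Type*} [AddCommGroup V] [Module ℚ V] (D : V →ₗ[ℚ] V)

theorem expOp_sub_two_smul_add_expOp_neg (F : ℕ → V) (n : ℕ) :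
    expOp D 1 F n - (2 : ℚ) • F n + expOp D (-1) F n
      = ∑ k ∈ range (n + 1), coeff k (centralSecondDiff ℚ) • (D ^ k) (F (n - k)) := by
  simp only [expOp, coeff_centralSecondDiff, add_div, sub_smul, add_smul, sum_sub_distrib,
    sum_add_distrib, ite_smul, zero_smul, sum_ite_eq', mem_range, one_pow]
  rw [if_pos n.succ_pos, pow_zero, Module.End.one_apply, Nat.sub_zero]
  abel

theorem pow_apply_bernoulliNumSeries {f F₀ : V} (h : D (D F₀) = f) {k m : ℕ} (hkm : 2 ≤ k + m) :
    (D ^ k) (bernoulliNumSeries D f F₀ m) =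
      coeff m (bernoulliSecondDiffInv ℚ) • (D ^ (k + m - 2)) f := by
  rcases m with _ | _ | j
  · obtain ⟨i, rfl⟩ : ∃ i, k = i + 2 := ⟨k - 2, by omega⟩
    simp [bernoulliNumSeries, coeff_bernoulliSecondDiffInv, pow_succ, h]
  · simp [bernoulliNumSeries, coeff_bernoulliSecondDiffInv]
  · rw [bernoulliNumSeries, if_neg (by omega), if_pos (by omega), map_smul, ← Module.End.mul_apply,
      ← pow_add, coeff_bernoulliSecondDiffInv, show j + 1 + 1 - 2 = j by omega,
      show k + (j + 1 + 1) - 2 = k + j by omega]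
    congr 1
    rw [Nat.factorial_succ, Nat.factorial_succ]
    push_cast
    field_simp
    ring

end Operators

/-- Let `V` be a `ℚ`-vector space, `D : V → V` linear, and `f, F₀ ∈ V`
with `D²F₀ = f`.  Then in `V⟦ℏ⟧` (with `e^{±ℏD}` acting coefficientwise):
`(e^{ℏD} − 2 + e^{−ℏD})·(F₀ − ∑_{n≥0} (B_{n+2}/((n+2)·n!))·ℏ^{n+2}·Dⁿ f) = ℏ²·f`,
where `B_n` is the `n`-th Bernoulli number. -/
theorem second_difference_inverse_formula {V : Type*} [AddCommGroup V] [Module ℚ V]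
    (D : V →ₗ[ℚ] V) (f F₀ : V) (h : D (D F₀) = f) :
    ∀ n : ℕ,
      expOp D 1 (bernoulliNumSeries D f F₀) n
        - (2 : ℚ) • bernoulliNumSeries D f F₀ n
        + expOp D (-1) (bernoulliNumSeries D f F₀) n
      = if n = 2 then f else 0 := by
  intro n
  rw [expOp_sub_two_smul_add_expOp_neg]
  obtain hn | hn := lt_or_ge n 2
  · interval_cases n <;>
      norm_num [sum_range_succ, coeff_centralSecondDiff, bernoulliNumSeries]
  calc _ = ∑ k ∈ range (n + 1),
          (coeff k (centralSecondDiff ℚ) * coeff (n - k) (bernoulliSecondDiffInv ℚ)) •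
            (D ^ (n - 2)) f := by
        refine sum_congr rfl fun k hk => ?_
        have hkn : k ≤ n := Nat.lt_succ_iff.mp (mem_range.mp hk)
        rw [pow_apply_bernoulliNumSeries D h (by omega), smul_smul, Nat.add_sub_cancel' hkn]
    _ = coeff n ((X : ℚ⟦X⟧) ^ 2) • (D ^ (n - 2)) f := by
        rw [← sum_smul, ← centralSecondDiff_mul_bernoulliSecondDiffInv, coeff_mul,
          Nat.sum_antidiagonal_eq_sum_range_succ_mk]
    _ = if n = 2 then f else 0 := by
        rw [coeff_X_pow]
        split_ifs with h2 <;> simp [h2]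
end

section
/- Let A be a commutative ℚ-algebra, V an A-module, D : V → V an A-linear map, ν ∈ A, and let f, Φ ∈ V satisfy DΦ = f. In V⟦ħ⟧, define e^{cħD} = ∑_{k≥0} c^k·ħ^k·D^k/k! for c ∈ A (acting coefficientwise). Then e^{(ν−1)ħD}·(e^{ħD} − 1)·(Φ + ∑_{m≥0} (B_{m+1}(1−ν)/(m+1)!)·ħ^{m+1}·D^m f) = ħ·f, where B_n(X) denotes the n-th Bernoulli polynomial, defined by w·e^{Xw}/(e^w − 1) = ∑_{n≥0} B_n(X)·w^n/n!, evaluated at 1−ν ∈ A. -/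
open PowerSeries Nat

/-!
Write `P(ℏD) Φ` for the series `∑ₙ (coeff n P) ℏⁿ Dⁿ Φ` attached to `P ∈ A⟦X⟧`. Since
`DΦ = f`, the series `Φ + ∑ (B_{m+1}(1−ν)/(m+1)!) ℏ^{m+1} Dᵐ f` is `B(ℏD) Φ` for the Bernoulli
generating function `B(X) = ∑ Bₙ(1−ν) Xⁿ/n!`, and `e^{cℏD}` acts on such series as
multiplication of `P` by `e^{cX}`. The left-hand side is therefore `Q(ℏD) Φ` with
`Q = e^{(ν−1)X} (e^X − 1) B(X)`, which is `X` by the generating-function identity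
`(e^X − 1) B(X) = X e^{(1−ν)X}`; and `X(ℏD) Φ = ℏ DΦ = ℏ f`.
-/

/-- The coefficientwise action of the operator `e^{cℏD} = ∑_k cᵏ ℏᵏ Dᵏ/k!` (for `c ∈ A`)
on a formal power series `∑_n ℏⁿ F n` with coefficients in an `A`-module `V`, where `A`
is a commutative `ℚ`-algebra: the `n`-th coefficient of the result is
`∑_{k≤n} ((1/k!)·cᵏ) • Dᵏ (F (n−k))`. -/
noncomputable def expOpA {A V : Type*} [CommRing A] [Algebra ℚ A]
    [AddCommGroup V] [Module A V] (D : V →ₗ[A] V) (c : A) (F : ℕ → V) : ℕ → V :=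
  fun n => ∑ k ∈ Finset.range (n + 1),
    (algebraMap ℚ A (1 / (k.factorial : ℚ)) * c ^ k) • (D ^ k) (F (n - k))

/-- The coefficients of the series `Φ + ∑_{m≥0} (B_{m+1}(1−ν)/(m+1)!)·ℏ^{m+1}·Dᵐ f`:
`Φ` at `ℏ⁰` and `(B_k(1−ν)/k!) • D^{k−1} f` at `ℏᵏ` for `k ≥ 1`, where `B_n(X)` is the
`n`-th Bernoulli polynomial evaluated at `1−ν ∈ A`. -/
noncomputable def bernoulliPolySeries {A V : Type*} [CommRing A] [Algebra ℚ A]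
    [AddCommGroup V] [Module A V] (D : V →ₗ[A] V) (ν : A) (f Φ : V) : ℕ → V :=
  fun k => if k = 0 then Φ else
    (algebraMap ℚ A (1 / (k.factorial : ℚ))
        * Polynomial.aeval (1 - ν) (Polynomial.bernoulli k)) • (D ^ (k - 1)) f

section OperatorCalculus

variable {A V : Type*} [CommRing A] [AddCommGroup V] [Module A V]

noncomputable def opSeries (D : V →ₗ[A] V) (P : A⟦X⟧) (Φ : V) : ℕ → V :=
  fun n => coeff n P • (D ^ n) Φ

theorem opSeries_sub (D : V →ₗ[A] V) (P Q : A⟦X⟧) (Φ : V) :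
    opSeries D (P - Q) Φ = opSeries D P Φ - opSeries D Q Φ := by
  ext n
  simp only [opSeries, map_sub, sub_smul, Pi.sub_apply]

theorem opSeries_X (D : V →ₗ[A] V) (Φ : V) (n : ℕ) :
    opSeries D X Φ n = if n = 1 then D Φ else 0 := by
  rw [opSeries, coeff_X]
  split_ifs with hn
  · rw [hn, one_smul, pow_one]
  · rw [zero_smul]

theorem expOpA_opSeries [Algebra ℚ A] (D : V →ₗ[A] V) (c : A) (P : A⟦X⟧) (Φ : V) :
    expOpA D c (opSeries D P Φ) = opSeries D (rescale c (exp A) * P) Φ := by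
  ext n
  rw [expOpA, opSeries, coeff_mul, Finset.Nat.sum_antidiagonal_eq_sum_range_succ_mk,
    Finset.sum_smul]
  refine Finset.sum_congr rfl fun k hk => ?_
  have hkn : k + (n - k) = n := Nat.add_sub_cancel' (Finset.mem_range_succ_iff.mp hk)
  rw [opSeries, map_smul, ← Module.End.mul_apply, ← pow_add, hkn, smul_smul, coeff_rescale,
    coeff_exp, mul_comm (c ^ k)]

end OperatorCalculus

section Bernoulli

variable {A : Type*} [CommRing A] [Algebra ℚ A]

noncomputable def bernoulliGenSeries (t : A) : A⟦X⟧ :=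
  PowerSeries.mk fun n => Polynomial.aeval t ((1 / n ! : ℚ) • Polynomial.bernoulli n)

theorem coeff_bernoulliGenSeries (t : A) (n : ℕ) :
    coeff n (bernoulliGenSeries t)
      = algebraMap ℚ A (1 / n ! : ℚ) * Polynomial.aeval t (Polynomial.bernoulli n) := by
  rw [bernoulliGenSeries, coeff_mk, map_smul, Algebra.smul_def]

theorem rescale_exp_neg_mul_exp_sub_one_mul_bernoulliGenSeries (t : A) :
    rescale (-t) (exp A) * ((exp A - 1) * bernoulliGenSeries t) = X := by
  rw [mul_comm (exp A - 1), bernoulliGenSeries, Polynomial.bernoulli_generating_function,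
    mul_left_comm, exp_mul_exp_eq_exp_add, neg_add_cancel, rescale_zero]
  simp

end Bernoulli

theorem bernoulliPolySeries_eq_opSeries {A V : Type*} [CommRing A] [Algebra ℚ A]
    [AddCommGroup V] [Module A V] (D : V →ₗ[A] V) (ν : A) (f Φ : V) (h : D Φ = f) :
    bernoulliPolySeries D ν f Φ = opSeries D (bernoulliGenSeries (1 - ν)) Φ := by
  ext n
  rw [bernoulliPolySeries, opSeries, coeff_bernoulliGenSeries]
  split_ifs with hn
  · simp [hn]
  · rw [← h, ← Module.End.mul_apply, ← pow_succ, Nat.sub_add_cancel (Nat.pos_of_ne_zero hn)]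

/-- Let `A` be a commutative `ℚ`-algebra, `V` an `A`-module,
`D : V → V` an `A`-linear map, `ν ∈ A`, and `f, Φ ∈ V` with `DΦ = f`.  Then in `V⟦ℏ⟧`:
`e^{(ν−1)ℏD}·(e^{ℏD} − 1)·(Φ + ∑_{m≥0} (B_{m+1}(1−ν)/(m+1)!)·ℏ^{m+1}·Dᵐ f) = ℏ·f`. -/
theorem shift_operator_inverse_formula {A V : Type*} [CommRing A] [Algebra ℚ A]
    [AddCommGroup V] [Module A V] (D : V →ₗ[A] V) (ν : A) (f Φ : V) (h : D Φ = f) :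
    ∀ n : ℕ,
      expOpA D (ν - 1)
        (fun j => expOpA D 1 (bernoulliPolySeries D ν f Φ) j
          - bernoulliPolySeries D ν f Φ j) n
      = if n = 1 then f else 0 := by
  intro n
  set B := bernoulliGenSeries (1 - ν)
  have hdiff : (fun j => expOpA D 1 (bernoulliPolySeries D ν f Φ) j
      - bernoulliPolySeries D ν f Φ j) = opSeries D ((exp A - 1) * B) Φ := by
    rw [bernoulliPolySeries_eq_opSeries D ν f Φ h, sub_one_mul, opSeries_sub, expOpA_opSeries,
      rescale_one, RingHom.id_apply]
    rfl
  rw [hdiff, expOpA_opSeries, ← neg_sub,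
    rescale_exp_neg_mul_exp_sub_one_mul_bernoulliGenSeries, opSeries_X, h]
end
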